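/- Let p and q be coprime integers with p > q ≥ 2, and let x, y, u, v be the unique positive integers with p = x + y, q = u + v, and v·x − u·y = 1. Then the polynomial (X^{pq} − 1)·(X − 1)/((X^p − 1)·(X^q − 1)) in ℤ[X] has exactly 2·v·x − 1 nonzero coefficients. -/

import Mathlib

/-!
Writing `p = x + y`, `q = u + v` with `v x - u y = 1` means `v p = y q + 1` and `x q = u p + 1`,
and then a direct computation with geometric sums gives
`Δ = ∑_{i < v, j < x} X^(i p + j q) - X · ∑_{i < u, j < y} X^(i p + j q)`.
Since `p` and `q` are coprime, `i p + j q` determines `(i, j)` as long as `i < q`; this makes the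
`v x + u y` exponents pairwise distinct (for the cross terms compare `i p + (j + y) q` with
`(i' + v) p + j' q`), so no cancellation occurs and `Δ` has `v x + u y = 2 v x - 1` terms.
-/

open Polynomial Finset

theorem Nat.Coprime.eq_of_mul_add_mul_eq {p q i i' j j' : ℕ} (hpq : Nat.Coprime p q)
    (hi : i < q) (hi' : i' < q) (h : i * p + j * q = i' * p + j' * q) : i = i' ∧ j = j' := by
  have hmod : i * p ≡ i' * p [MOD q] := by
    simpa [Nat.ModEq, Nat.add_mul_mod_self_right] using congrArg (· % q) h
  obtain rfl : i = i' := (Nat.ModEq.cancel_right_of_coprime hpq.symm hmod).eq_of_lt_of_lt hi hi'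
  exact ⟨rfl, Nat.eq_of_mul_eq_mul_right (by omega) (Nat.add_left_cancel h)⟩

def latticeBox (p q a b : ℕ) : Finset ℕ :=
  (range a ×ˢ range b).image fun ij => ij.1 * p + ij.2 * q

section LatticeBox

variable {p q a b : ℕ}

theorem injOn_latticeBox (hpq : Nat.Coprime p q) (ha : a ≤ q) :
    Set.InjOn (fun ij : ℕ × ℕ => ij.1 * p + ij.2 * q) ↑(range a ×ˢ range b) := by
  rintro ⟨i, j⟩ hij ⟨i', j'⟩ hij' h
  simp only [coe_product, coe_range, Set.mem_prod, Set.mem_Iio] at hij hij'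
  obtain ⟨rfl, rfl⟩ := hpq.eq_of_mul_add_mul_eq (by omega) (by omega) h
  rfl

theorem card_latticeBox (hpq : Nat.Coprime p q) (ha : a ≤ q) :
    #(latticeBox p q a b) = a * b := by
  rw [latticeBox, card_image_of_injOn (injOn_latticeBox hpq ha), card_product, card_range,
    card_range]

theorem sum_pow_latticeBox {R : Type*} [CommSemiring R] (t : R) (hpq : Nat.Coprime p q)
    (ha : a ≤ q) :
    ∑ n ∈ latticeBox p q a b, t ^ n = (∑ i ∈ range a, (t ^ p) ^ i) * ∑ j ∈ range b, (t ^ q) ^ j := by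
  rw [latticeBox, sum_image (injOn_latticeBox hpq ha), sum_mul_sum, sum_product]
  simp only [pow_add, ← pow_mul, mul_comm]

end LatticeBox

theorem disjoint_latticeBox_image_succ {p q x y u v : ℕ} (hpq : Nat.Coprime p q)
    (hvp : v * p = y * q + 1) (huv : u + v = q) :
    Disjoint (latticeBox p q v x) ((latticeBox p q u y).image (· + 1)) := by
  simp only [latticeBox, image_image, disjoint_left, mem_image, mem_product, mem_range]
  rintro _ ⟨⟨i, j⟩, ⟨hi, -⟩, rfl⟩ ⟨⟨i', j'⟩, ⟨hi', -⟩, h⟩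
  have key : (i' + v) * p + j' * q = i * p + (j + y) * q := by
    simp only [Function.comp_apply] at h
    linear_combination h + hvp
  have := (hpq.eq_of_mul_add_mul_eq (by omega) (by omega) key).1
  omega

theorem torus_alexander_mul_eq {R : Type*} [CommRing R] (t : R) {p q x y u v : ℕ}
    (hpq : Nat.Coprime p q) (hvp : v * p = y * q + 1) (hxq : x * q = u * p + 1)
    (huv : u + v = q) :
    (∑ n ∈ latticeBox p q v x, t ^ n - ∑ n ∈ (latticeBox p q u y).image (· + 1), t ^ n)
      * ((t ^ p - 1) * (t ^ q - 1)) = (t ^ (p * q) - 1) * (t - 1) := by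
  simp only [sum_image (add_left_injective 1).injOn, pow_succ' t, ← mul_sum]
  rw [sum_pow_latticeBox t hpq (by omega), sum_pow_latticeBox t hpq (by omega)]
  have hv : (t ^ p) ^ v = t ^ (y * q) * t := by rw [← pow_mul, ← pow_succ, mul_comm, hvp]
  have hx : (t ^ q) ^ x = t ^ (u * p) * t := by rw [← pow_mul, ← pow_succ, mul_comm, hxq]
  have hpow : t ^ (p * q) = t ^ (u * p) * t ^ (y * q) * t := by
    rw [← pow_add, ← pow_succ, add_assoc, ← hvp, ← add_mul, huv, mul_comm]
  calc _ = ((t ^ p) ^ v - 1) * ((t ^ q) ^ x - 1)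
          - t * (((t ^ p) ^ u - 1) * ((t ^ q) ^ y - 1)) := by
        simp only [← geom_sum_mul]; ring
    _ = _ := by rw [hv, hx, hpow, ← pow_mul, ← pow_mul, mul_comm p u, mul_comm q y]; ring

theorem support_sum_X_pow_sub_sum_X_pow {R : Type*} [Ring R] [Nontrivial R] {s t : Finset ℕ}
    (hst : Disjoint s t) : (∑ n ∈ s, X ^ n - ∑ n ∈ t, X ^ n : R[X]).support = s ∪ t := by
  ext n
  simp only [mem_support_iff, coeff_sub, finsetSum_coeff, coeff_X_pow, mem_union]
  by_cases hs : n ∈ s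
  · simp [hs, disjoint_left.mp hst hs]
  · by_cases ht : n ∈ t <;> simp [hs, ht]

open Polynomial in
theorem torus_alexander_support_card_general (p q x y u v : ℕ) (hcop : Nat.Coprime p q)
    (hpxy : p = x + y) (hquv : q = u + v)
    (hdet : (v : ℤ) * x - u * y = 1)
    (Δ : ℤ[X])
    (hΔ : Δ * (((X : ℤ[X]) ^ p - 1) * (X ^ q - 1)) = (X ^ (p * q) - 1) * (X - 1)) :
    Δ.support.card = 2 * v * x - 1 := by
  have hvp : v * p = y * q + 1 := by subst hpxy hquv; zify; linear_combination hdet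
  have hxq : x * q = u * p + 1 := by subst hpxy hquv; zify; linear_combination hdet
  have hp : p ≠ 0 := by rintro rfl; simp at hvp
  have hq : q ≠ 0 := by rintro rfl; simp at hxq
  have hΔ' : Δ = ∑ n ∈ latticeBox p q v x, X ^ n
      - ∑ n ∈ (latticeBox p q u y).image (· + 1), X ^ n := by
    refine mul_right_cancel₀ (mul_ne_zero ?_ ?_)
      (hΔ.trans (torus_alexander_mul_eq X hcop hvp hxq hquv.symm).symm) <;>
    exact X_pow_sub_C_ne_zero (by omega) 1
  have hdisj := disjoint_latticeBox_image_succ (x := x) (y := y) hcop hvp hquv.symm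
  have hvx : v * x = u * y + 1 := by zify; linear_combination hdet
  rw [hΔ', support_sum_X_pow_sub_sum_X_pow hdisj, card_union_of_disjoint hdisj,
    card_image_of_injective _ (add_left_injective 1), card_latticeBox hcop (by omega),
    card_latticeBox hcop (by omega), mul_assoc, hvx]
  omega

open Polynomial in
/-- For coprime `p > q ≥ 2` with the unique decomposition `p = x + y`, `q = u + v`,
`v·x − u·y = 1` into positive integers, the Alexander polynomial
`(X^{pq} − 1)(X − 1)/((X^p − 1)(X^q − 1))` of the `(p,q)`-torus knot has exactly
`2·v·x − 1` nonzero coefficients. -/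
theorem torus_alexander_support_card (p q x y u v : ℕ) (hcop : Nat.Coprime p q)
    (hq : 2 ≤ q) (hpq : q < p)
    (hx : 0 < x) (hy : 0 < y) (hu : 0 < u) (hv : 0 < v)
    (hpxy : p = x + y) (hquv : q = u + v)
    (hdet : (v : ℤ) * x - u * y = 1)
    (Δ : ℤ[X])
    (hΔ : Δ * (((X : ℤ[X]) ^ p - 1) * (X ^ q - 1)) = (X ^ (p * q) - 1) * (X - 1)) :
    Δ.support.card = 2 * v * x - 1 :=
  torus_alexander_support_card_general p q x y u v hcop hpxy hquv hdet Δ hΔ
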